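/- arXiv:2507.00708 — 6 statements merged into one kernel-verified Lean document; each statement's English description precedes it below -/
import Mathlib

section
/- In a connected graph G with at least 2 vertices, every vertex of degree 1 belongs to every monitoring edge-geodetic set of G. -/
/-- Edge `e` is monitored by the pair `x, y` if `x ≠ y` and `e` lies on
every shortest path (realized as a walk of length `G.dist x y`) between `x` and `y`. -/
def Monitors {V : Type*} (G : SimpleGraph V) (x y : V) (e : Sym2 V) : Prop :=
  x ≠ y ∧ ∀ p : G.Walk x y, p.length = G.dist x y → e ∈ p.edges

/-- `M` is a monitoring edge-geodetic set of `G` if every edge of `G`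
is monitored by some pair of vertices of `M`. -/
def IsMEGSet {V : Type*} (G : SimpleGraph V) (M : Set V) : Prop :=
  ∀ e ∈ G.edgeSet, ∃ x ∈ M, ∃ y ∈ M, Monitors G x y e

/-- In a connected graph with at least 2 vertices, every vertex of degree 1
belongs to every MEG-set. -/
theorem degree_one_mem_megset {V : Type*} [Fintype V] [DecidableEq V]
    (G : SimpleGraph V) [DecidableRel G.Adj]
    (hconn : G.Connected) (hcard : 2 ≤ Fintype.card V)
    (v : V) (hdeg : G.degree v = 1)
    (M : Set V) (hM : IsMEGSet G M) : v ∈ M := by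
  obtain ⟨u, hu⟩ := Finset.card_eq_one.mp hdeg
  have hadj : G.Adj v u := by
    have : u ∈ G.neighborFinset v := hu ▸ Finset.mem_singleton_self u
    exact (SimpleGraph.mem_neighborFinset G v u).mp this
  have huniq : ∀ w, G.Adj v w → w = u := by
    intro w hw
    have : w ∈ G.neighborFinset v := (SimpleGraph.mem_neighborFinset G v w).mpr hw
    simpa [hu] using this
  have he : s(v, u) ∈ G.edgeSet := hadj
  obtain ⟨x, hx, y, hy, hxy, hmon⟩ := hM _ he
  obtain ⟨p, hp⟩ := hconn.exists_walk_length_eq_dist x y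
  have hpath := p.isPath_of_length_eq_dist hp
  have hep : s(v, u) ∈ p.edges := hmon p hp
  have hvsupp : v ∈ p.support := p.fst_mem_support_of_mem_edges hep
  by_contra hvM
  have hvx : v ≠ x := fun h => hvM (h ▸ hx)
  have hvy : v ≠ y := fun h => hvM (h ▸ hy)
  obtain ⟨q, r, rfl⟩ := SimpleGraph.Walk.mem_support_iff_exists_append.mp hvsupp
  -- q : Walk x v, r : Walk v y, both nonnil
  have hqnil : ¬ q.reverse.Nil := SimpleGraph.Walk.not_nil_of_ne hvx
  have hrnil : ¬ r.Nil := SimpleGraph.Walk.not_nil_of_ne hvy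
  obtain ⟨w, hw, q', hq'⟩ := SimpleGraph.Walk.not_nil_iff.mp hqnil
  obtain ⟨w', hw', r', hr'⟩ := SimpleGraph.Walk.not_nil_iff.mp hrnil
  have hwu : w = u := huniq w hw
  have hw'u : w' = u := huniq w' hw'
  -- u ∈ q.support
  have huq : u ∈ q.support := by
    have : w ∈ q.reverse.support := by
      rw [hq']; simp
    rw [SimpleGraph.Walk.support_reverse, List.mem_reverse] at this
    exact hwu ▸ this
  -- u ∈ r.support.tail
  have hur : u ∈ r.support.tail := by
    subst hw'u
    rw [hr']
    simp
  have hnodup := (SimpleGraph.Walk.isPath_def _).mp hpath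
  rw [SimpleGraph.Walk.support_append] at hnodup
  exact (List.disjoint_of_nodup_append hnodup) huq hur
end

section
/- In the reduction graph G built from a Set Cover instance, the set L of all degree-1 vertices (namely L = Y' ∪ Z') monitors all edges having both endpoints in Y ∪ Y' ∪ Z ∪ Z'. -/
/-- Vertices of the reduction graph built from a Set Cover instance with
`η` items, `h` sets and `k` copies of the incidence graph:
`item i ℓ` is the copy `x_{i,ℓ}`, `setv j ℓ` is the copy `S_{j,ℓ}`,
`y i`/`yp i` are `y_i`/`y'_i`, and `z j`/`zp j` are `z_j`/`z'_j`. -/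
inductive RV (η h k : ℕ) where
  | item : Fin η → Fin k → RV η h k
  | setv : Fin h → Fin k → RV η h k
  | y : Fin η → RV η h k
  | yp : Fin η → RV η h k
  | z : Fin h → RV η h k
  | zp : Fin h → RV η h k

/-- The (asymmetric) base relation describing the edges of the reduction graph. -/
def redRel {η h k : ℕ} (S : Fin h → Set (Fin η)) : RV η h k → RV η h k → Prop
  | .item i ℓ, .setv j m => ℓ = m ∧ i ∈ S j
  | .item i _, .y i' => i = i'
  | .y _, .y _ => True
  | .y i, .yp i' => i = i'
  | .setv j _, .z j' => j = j'
  | .z j, .zp j' => j = j'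
  | _, _ => False

/-- The reduction graph `G` built from the Set Cover instance `S`. -/
def redGraph {η h k : ℕ} (S : Fin h → Set (Fin η)) : SimpleGraph (RV η h k) :=
  SimpleGraph.fromRel (redRel S)

/-- `L = Y' ∪ Z'`, the set of degree-1 vertices of the reduction graph. -/
def Lset (η h k : ℕ) : Set (RV η h k) :=
  {v | ∃ i, v = .yp i} ∪ {v | ∃ j, v = .zp j}

/-- `Y ∪ Y' ∪ Z ∪ Z'`: the vertices of the reduction graph that are not
copies of items or sets. -/
def YZset (η h k : ℕ) : Set (RV η h k) := fun v =>
  match v with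
  | .item _ _ => False
  | .setv _ _ => False
  | _ => True

namespace SimpleGraph

variable {V : Type*} {G : SimpleGraph V}

lemma Walk.mk_mem_edges_of_pendant {x y b : V} (hx : ∀ w, G.Adj x w → w = y) (hxb : x ≠ b)
    (p : G.Walk x b) : s(x, y) ∈ p.edges := by
  cases p with
  | nil => exact absurd rfl hxb
  | cons hw q => obtain rfl := hx _ hw; simp

lemma monitors_pendant_edge {x y b : V} (hx : ∀ w, G.Adj x w → w = y) (hxb : x ≠ b) :
    Monitors G x b s(x, y) :=
  ⟨hxb, fun p _ => p.mk_mem_edges_of_pendant hx hxb⟩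

lemma monitors_of_pendant_of_pendant {x x' y y' : V} (hx : ∀ w, G.Adj x w ↔ w = y)
    (hx' : ∀ w, G.Adj x' w ↔ w = y') (hyy' : G.Adj y y') (hxx' : x ≠ x') :
    Monitors G x x' s(y, y') := by
  refine ⟨hxx', fun p hp => ?_⟩
  have hp3 : p.length ≤ 3 := by
    rw [hp]
    simpa using dist_le (.cons ((hx y).2 rfl) (.cons hyy' (.cons ((hx' y').2 rfl).symm .nil)))
  cases p with
  | nil => exact absurd rfl hxx'
  | cons h₁ q =>
    obtain rfl := (hx _).1 h₁
    cases q with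
    | nil =>
      obtain rfl := (hx' _).1 h₁.symm
      simp [Sym2.eq_swap]
    | cons h₂ r =>
      cases r with
      | nil => exact absurd ((hx' _).1 h₂.symm) hyy'.ne
      | cons h₃ t =>
        cases t with
        | nil =>
          obtain rfl := (hx' _).1 h₃.symm
          simp
        | cons _ _ => simp only [Walk.length_cons] at hp3; omega

end SimpleGraph

section ReductionGraph

variable {η h k : ℕ} {S : Fin h → Set (Fin η)}

lemma redGraph_adj_yp {i : Fin η} {w : RV η h k} : (redGraph S).Adj (.yp i) w ↔ w = .y i := by
  cases w <;> simp [redGraph, redRel, eq_comm]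

lemma redGraph_adj_zp {j : Fin h} {w : RV η h k} : (redGraph S).Adj (.zp j) w ↔ w = .z j := by
  cases w <;> simp [redGraph, redRel, eq_comm]

lemma redGraph_adj_y_y {i i' : Fin η} : (redGraph S).Adj (.y i : RV η h k) (.y i') ↔ i ≠ i' := by
  simp [redGraph, redRel]

lemma redGraph_adj_cases_of_mem_YZset {u v : RV η h k} (huv : (redGraph S).Adj u v)
    (hu : u ∈ YZset η h k) (hv : v ∈ YZset η h k) :
    (∃ i i', i ≠ i' ∧ u = .y i ∧ v = .y i') ∨ (∃ i, s(u, v) = s(.yp i, .y i)) ∨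
      ∃ j, s(u, v) = s(.zp j, .z j) := by
  cases u <;> try exact hu.elim
  all_goals cases v <;> try exact hv.elim
  all_goals simp_all [redGraph, redRel, Sym2.eq_swap]

end ReductionGraph

theorem L_monitors_outside_edges_general {η h k : ℕ}
    (S : Fin h → Set (Fin η))
    (hh : 2 ≤ h) :
    ∀ u v : RV η h k, (redGraph S).Adj u v → u ∈ YZset η h k → v ∈ YZset η h k →
      ∃ a ∈ Lset η h k, ∃ b ∈ Lset η h k, Monitors (redGraph S) a b s(u, v) := by
  intro u v huv hu hv
  rcases redGraph_adj_cases_of_mem_YZset huv hu hv with ⟨i, i', hi, rfl, rfl⟩ | ⟨i, he⟩ | ⟨j, he⟩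
  · exact ⟨_, .inl ⟨i, rfl⟩, _, .inl ⟨i', rfl⟩, SimpleGraph.monitors_of_pendant_of_pendant
      (fun _ => redGraph_adj_yp) (fun _ => redGraph_adj_yp) (redGraph_adj_y_y.2 hi) (by simpa)⟩
  · rw [he]
    exact ⟨_, .inl ⟨i, rfl⟩, _, .inr ⟨⟨0, by omega⟩, rfl⟩,
      SimpleGraph.monitors_pendant_edge (fun _ => redGraph_adj_yp.1) (by simp)⟩
  · obtain ⟨j', hj'⟩ := Fintype.exists_ne_of_one_lt_card (by rw [Fintype.card_fin]; omega) j
    rw [he]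
    exact ⟨_, .inr ⟨j, rfl⟩, _, .inr ⟨j', rfl⟩,
      SimpleGraph.monitors_pendant_edge (fun _ => redGraph_adj_zp.1) (by simpa using hj'.symm)⟩

/-- In the reduction graph, `L` monitors all edges having both endpoints in
`Y ∪ Y' ∪ Z ∪ Z'`. -/
theorem L_monitors_outside_edges {η h k : ℕ}
    (S : Fin h → Set (Fin η)) (hS : Function.Injective S)
    (hh : 2 ≤ h) (hk : 2 ≤ k)
    (hsets : ∀ j, (S j).Nontrivial)
    (hitems : ∀ i : Fin η, ∃ j j' : Fin h, j ≠ j' ∧ i ∈ S j ∧ i ∈ S j') :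
    ∀ u v : RV η h k, (redGraph S).Adj u v → u ∈ YZset η h k → v ∈ YZset η h k →
      ∃ a ∈ Lset η h k, ∃ b ∈ Lset η h k, Monitors (redGraph S) a b s(u, v) :=
  L_monitors_outside_edges_general S hh
end

section
/- In the reduction graph G, for every minimal MEG-set M of G, for every item index i and every copy index ℓ, either x_{i,ℓ} ∈ M or there exists a set index j with x_i ∈ S_j and S_{j,ℓ} ∈ M. -/
/-! The edge `x_{i,ℓ} y_i` can only be monitored by a pair with an endpoint among `x_{i,ℓ}` and
its set neighbours `S_{j,ℓ}`. Otherwise orient a shortest `u`–`v` path through the edge as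
`u ⋯ t – S_{j,ℓ} – x_{i,ℓ} – y_i ⋯ v`. If `t = x_{i',ℓ}`, then `x_{i',ℓ} y_{i'} y_i` is a
shortcut; if `t = z_j`, the detour `z_j S_{j,ℓ'} x_{i,ℓ'} y_i` through another copy `ℓ' ≠ ℓ`
is a shortest path avoiding the edge. -/

namespace SimpleGraph

variable {V : Type*} {G : SimpleGraph V}

theorem Walk.exists_eq_concat_of_ne {u v : V} (hne : u ≠ v) (p : G.Walk u v) :
    ∃ (w : V) (q : G.Walk u w) (h : G.Adj w v), p = q.concat h :=
  ⟨_, p.dropLast, p.adj_penultimate (Walk.not_nil_of_ne hne), (Walk.concat_dropLast _).symm⟩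

theorem Walk.exists_eq_append_cons_of_mem_edges {a b u v : V} (hab : G.Adj a b) :
    ∀ p : G.Walk u v, s(a, b) ∈ p.edges →
      (∃ (w₁ : G.Walk u a) (w₂ : G.Walk b v), p = w₁.append (cons hab w₂)) ∨
      (∃ (w₁ : G.Walk v a) (w₂ : G.Walk b u), p.reverse = w₁.append (cons hab w₂))
  | .nil, he => by simp at he
  | .cons h q, he => by
    rw [Walk.edges_cons, List.mem_cons] at he
    rcases he with he | he
    · rcases Sym2.eq_iff.mp he with ⟨rfl, rfl⟩ | ⟨rfl, rfl⟩
      · exact Or.inl ⟨.nil, q, rfl⟩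
      · exact Or.inr ⟨q.reverse, .nil, by simp [Walk.reverse_cons]⟩
    · rcases exists_eq_append_cons_of_mem_edges hab q he with
        ⟨w₁, w₂, rfl⟩ | ⟨w₁, w₂, hrev⟩
      · exact Or.inl ⟨cons h w₁, w₂, rfl⟩
      · refine Or.inr ⟨w₁, w₂.concat h.symm, ?_⟩
        rw [Walk.reverse_cons, hrev, ← Walk.concat_eq_append, ← Walk.append_concat,
          Walk.concat_cons]

end SimpleGraph

theorem Monitors.symm {V : Type*} {G : SimpleGraph V} {x y : V} {e : Sym2 V}
    (h : Monitors G x y e) : Monitors G y x e := by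
  refine ⟨h.1.symm, fun p hp => ?_⟩
  simpa using h.2 p.reverse (by rw [SimpleGraph.Walk.length_reverse, hp, SimpleGraph.dist_comm])

section ReductionGraph

open SimpleGraph

variable {η h k : ℕ} {S : Fin h → Set (Fin η)}

theorem redGraph_adj {a b : RV η h k} :
    (redGraph S).Adj a b ↔ a ≠ b ∧ (redRel S a b ∨ redRel S b a) :=
  fromRel_adj _ _ _

theorem adj_item_y (i : Fin η) (ℓ : Fin k) : (redGraph S).Adj (.item i ℓ) (.y i) :=
  redGraph_adj.mpr ⟨by simp, Or.inl rfl⟩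

theorem adj_item_setv {i : Fin η} {j : Fin h} (ℓ : Fin k) (hij : i ∈ S j) :
    (redGraph S).Adj (.item i ℓ) (.setv j ℓ) :=
  redGraph_adj.mpr ⟨by simp, Or.inl ⟨rfl, hij⟩⟩

theorem adj_setv_z (j : Fin h) (ℓ : Fin k) : (redGraph S).Adj (.setv j ℓ) (.z j) :=
  redGraph_adj.mpr ⟨by simp, Or.inl rfl⟩

theorem adj_y_y {i i' : Fin η} (hne : i ≠ i') :
    (redGraph S).Adj (RV.y i : RV η h k) (.y i') :=
  redGraph_adj.mpr ⟨by simp [hne], Or.inl trivial⟩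

theorem adj_y_yp (i : Fin η) : (redGraph S).Adj (RV.y i : RV η h k) (.yp i) :=
  redGraph_adj.mpr ⟨by simp, Or.inl rfl⟩

theorem adj_z_zp (j : Fin h) : (redGraph S).Adj (RV.z j : RV η h k) (.zp j) :=
  redGraph_adj.mpr ⟨by simp, Or.inl rfl⟩

theorem eq_y_or_setv_of_adj_item {i : Fin η} {ℓ : Fin k} {x : RV η h k}
    (hadj : (redGraph S).Adj (.item i ℓ) x) :
    x = .y i ∨ ∃ j, i ∈ S j ∧ x = .setv j ℓ := by
  obtain ⟨-, hr | hr⟩ := redGraph_adj.mp hadj <;> cases x <;> simp only [redRel] at hr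
  · exact Or.inr ⟨_, hr.2, by rw [hr.1]⟩
  · exact Or.inl (by rw [hr])

theorem eq_z_or_item_of_adj_setv {j : Fin h} {ℓ : Fin k} {x : RV η h k}
    (hadj : (redGraph S).Adj (.setv j ℓ) x) :
    x = .z j ∨ ∃ i, i ∈ S j ∧ x = .item i ℓ := by
  obtain ⟨-, hr | hr⟩ := redGraph_adj.mp hadj <;> cases x <;> simp only [redRel] at hr
  · exact Or.inl (by rw [hr])
  · exact Or.inr ⟨_, hr.2, by rw [hr.1]⟩

theorem reachable_y (hsets : ∀ j, (S j).Nonempty) (hk : 0 < k) (i₀ : Fin η) :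
    ∀ u : RV η h k, (redGraph S).Reachable u (.y i₀) := by
  have hy (i : Fin η) : (redGraph S).Reachable (RV.y i : RV η h k) (.y i₀) := by
    by_cases hi : i = i₀
    · rw [hi]
    · exact (adj_y_y hi).reachable
  have hitem (i : Fin η) (ℓ : Fin k) : (redGraph S).Reachable (.item i ℓ) (.y i₀) :=
    (adj_item_y i ℓ).reachable.trans (hy i)
  have hsetv (j : Fin h) (ℓ : Fin k) : (redGraph S).Reachable (.setv j ℓ) (.y i₀) :=
    (adj_item_setv ℓ (hsets j).some_mem).symm.reachable.trans (hitem _ ℓ)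
  have hz (j : Fin h) : (redGraph S).Reachable (.z j) (.y i₀) :=
    (adj_setv_z j ⟨0, hk⟩).symm.reachable.trans (hsetv j _)
  intro u
  cases u with
  | item i ℓ => exact hitem i ℓ
  | setv j ℓ => exact hsetv j ℓ
  | y i => exact hy i
  | yp i => exact (adj_y_yp i).symm.reachable.trans (hy i)
  | z j => exact hz j
  | zp j => exact (adj_z_zp j).symm.reachable.trans (hz j)

end ReductionGraph

section ItemGuards

open SimpleGraph

variable {η h k : ℕ} {S : Fin h → Set (Fin η)}

def itemGuards (S : Fin h → Set (Fin η)) (i : Fin η) (ℓ : Fin k) : Set (RV η h k) :=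
  {w | w = .item i ℓ ∨ ∃ j, i ∈ S j ∧ w = .setv j ℓ}

theorem exists_walk_item_y_length_le_two (i i' : Fin η) (ℓ : Fin k) :
    ∃ r : (redGraph S).Walk (.item i' ℓ) (.y i), r.length ≤ 2 := by
  by_cases hi : i' = i
  · subst hi
    exact ⟨(adj_item_y i' ℓ).toWalk, by simp⟩
  · exact ⟨.cons (adj_item_y i' ℓ) (adj_y_y hi).toWalk, by simp⟩

theorem exists_geodesic_avoiding_item_y (hk : 2 ≤ k) {i : Fin η} {ℓ : Fin k} {u v : RV η h k}
    (hu : u ∉ itemGuards S i ℓ) (w₁ : (redGraph S).Walk u (.item i ℓ))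
    (w₂ : (redGraph S).Walk (.y i) v)
    (hgeo : (w₁.append (.cons (adj_item_y i ℓ) w₂)).length = (redGraph S).dist u v) :
    ∃ p : (redGraph S).Walk u v,
      p.length = (redGraph S).dist u v ∧ s(RV.item i ℓ, RV.y i) ∉ p.edges := by
  obtain ⟨s, q, hsx, rfl⟩ := w₁.exists_eq_concat_of_ne fun he => hu (Or.inl he)
  rcases eq_y_or_setv_of_adj_item hsx.symm with rfl | ⟨j, hij, rfl⟩
  · have := (redGraph S).dist_le (q.append w₂)
    simp only [Walk.length_append, Walk.length_concat, Walk.length_cons] at this hgeo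
    omega
  obtain ⟨t, q, hts, rfl⟩ := q.exists_eq_concat_of_ne fun he => hu (Or.inr ⟨j, hij, he⟩)
  rcases eq_z_or_item_of_adj_setv hts.symm with rfl | ⟨i', -, rfl⟩
  · -- a shortest walk is a path, so the edge `x_{i,ℓ} y_i` occurs in it only once
    have hnodup := ((Walk.isPath_of_length_eq_dist _ hgeo).isTrail).edges_nodup
    simp only [Walk.edges_append, Walk.edges_concat, Walk.edges_cons, List.concat_eq_append,
      List.append_assoc, List.cons_append, List.nil_append] at hnodup
    have : Nontrivial (Fin k) := Fin.nontrivial_iff_two_le.mpr hk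
    obtain ⟨ℓ', hℓ'⟩ := exists_ne ℓ
    let detour : (redGraph S).Walk (.z j) (.y i) :=
      .cons (adj_setv_z j ℓ').symm (.cons (adj_item_setv ℓ' hij).symm (adj_item_y i ℓ').toWalk)
    refine ⟨q.append (detour.append w₂), ?_, ?_⟩
    · rw [← hgeo]
      simp only [detour, Walk.cons_append, Walk.nil_append, Walk.length_append,
        Walk.length_cons, Walk.length_concat]
      omega
    · obtain ⟨-, hnodup₂, hdisj⟩ := List.nodup_append.mp hnodup
      simp only [List.nodup_cons, List.mem_cons] at hnodup₂
      simpa [detour, hℓ'.symm, hnodup₂.2.2.1] using fun he => hdisj _ he _ (by simp) rfl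
  · obtain ⟨r, hr⟩ := exists_walk_item_y_length_le_two (S := S) i i' ℓ
    have := (redGraph S).dist_le (q.append (r.append w₂))
    simp only [Walk.length_append, Walk.length_concat, Walk.length_cons] at this hgeo
    omega

theorem mem_itemGuards_of_monitors (hsets : ∀ j, (S j).Nonempty) (hk : 2 ≤ k)
    {i : Fin η} {ℓ : Fin k} {u v : RV η h k}
    (hmon : Monitors (redGraph S) u v s(RV.item i ℓ, RV.y i)) :
    u ∈ itemGuards S i ℓ ∨ v ∈ itemGuards S i ℓ := by
  by_contra! ⟨hu, hv⟩
  have reach := reachable_y (k := k) hsets (by omega) i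
  obtain ⟨p, hp⟩ := ((reach u).trans (reach v).symm).exists_walk_length_eq_dist
  rcases p.exists_eq_append_cons_of_mem_edges (adj_item_y i ℓ) (hmon.2 p hp) with
    ⟨w₁, w₂, rfl⟩ | ⟨w₁, w₂, hrev⟩
  · obtain ⟨p', hp', he⟩ := exists_geodesic_avoiding_item_y hk hu w₁ w₂ hp
    exact he (hmon.2 p' hp')
  · have hgeo : (w₁.append (.cons (adj_item_y i ℓ) w₂)).length = (redGraph S).dist v u := by
      rw [← hrev, Walk.length_reverse, hp, dist_comm]
    obtain ⟨p', hp', he⟩ := exists_geodesic_avoiding_item_y hk hv w₁ w₂ hgeo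
    exact he (hmon.symm.2 p' hp')

end ItemGuards

theorem minimal_megset_covers_items_general {η h k : ℕ}
    (S : Fin h → Set (Fin η)) (hk : 2 ≤ k)
    (hsets : ∀ j, (S j).Nontrivial)
    (M : Set (RV η h k)) (hM : IsMEGSet (redGraph S) M) :
    ∀ (i : Fin η) (ℓ : Fin k),
      RV.item i ℓ ∈ M ∨ ∃ j : Fin h, i ∈ S j ∧ RV.setv j ℓ ∈ M := by
  intro i ℓ
  obtain ⟨u, hu, v, hv, hmon⟩ := hM s(_, _) (adj_item_y i ℓ)
  have hguard {w : RV η h k} (hw : w ∈ M) (hg : w ∈ itemGuards S i ℓ) :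
      RV.item i ℓ ∈ M ∨ ∃ j : Fin h, i ∈ S j ∧ RV.setv j ℓ ∈ M := by
    rcases hg with rfl | ⟨j, hij, rfl⟩
    exacts [Or.inl hw, Or.inr ⟨j, hij, hw⟩]
  rcases mem_itemGuards_of_monitors (fun j => (hsets j).nonempty) hk hmon with hg | hg
  exacts [hguard hu hg, hguard hv hg]

/-- For every minimal MEG-set `M` of the reduction graph, for every item `i`
and every copy `ℓ`, either `x_{i,ℓ} ∈ M` or some `S_{j,ℓ} ∈ M` with `x_i ∈ S_j`. -/
theorem minimal_megset_covers_items {η h k : ℕ}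
    (S : Fin h → Set (Fin η)) (hS : Function.Injective S)
    (hh : 2 ≤ h) (hk : 2 ≤ k)
    (hsets : ∀ j, (S j).Nontrivial)
    (hitems : ∀ i : Fin η, ∃ j j' : Fin h, j ≠ j' ∧ i ∈ S j ∧ i ∈ S j')
    (M : Set (RV η h k)) (hM : IsMEGSet (redGraph S) M)
    (hmin : ∀ v ∈ M, ¬ IsMEGSet (redGraph S) (M \ {v})) :
    ∀ (i : Fin η) (ℓ : Fin k),
      RV.item i ℓ ∈ M ∨ ∃ j : Fin h, i ∈ S j ∧ RV.setv j ℓ ∈ M :=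
  minimal_megset_covers_items_general S hk hsets M hM
end

section
/- In the hardness reduction graph H built from a planar graph G of girth at least 7, if D is a dominating set of G of size at most k, then M = D ∪ L'' ∪ {v*'} is a MEG-set of H, and |M| ≤ k + |V(G)| + 1. -/
/-- Vertices of the hardness-reduction graph `H` built from `G`:
`orig v` is the original vertex `v`, `pend1 v = v'`, `pend2 v = v''`,
`star = v*` and `starp = v*'`. -/
inductive HV (V : Type*) where
  | orig : V → HV V
  | pend1 : V → HV V
  | pend2 : V → HV V
  | star : HV V
  | starp : HV V

/-- The (asymmetric) base relation describing the edges of `H`. -/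
def hRel {V : Type*} (G : SimpleGraph V) : HV V → HV V → Prop
  | .orig u, .orig v => G.Adj u v
  | .orig u, .pend1 v => u = v
  | .pend1 u, .pend2 v => u = v
  | .pend1 _, .star => True
  | .star, .starp => True
  | _, _ => False

/-- The hardness-reduction graph `H`: `G` with a pendant path `v–v'–v''`
attached to each vertex `v`, a vertex `v*` adjacent to every `v'`, and a
pendant vertex `v*'` adjacent to `v*`. -/
def hGraph {V : Type*} (G : SimpleGraph V) : SimpleGraph (HV V) :=
  SimpleGraph.fromRel (hRel G)

/-- `L'' = {v'' : v ∈ V(G)}`. -/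
def Lpp (V : Type*) : Set (HV V) := {v | ∃ u, v = HV.pend2 u}


section Aux

open SimpleGraph Walk HV

variable {V : Type*} {G : SimpleGraph V}

lemma hAdj (a b : HV V) : (hGraph G).Adj a b ↔ a ≠ b ∧ (hRel G a b ∨ hRel G b a) :=
  SimpleGraph.fromRel_adj _ a b

lemma hAdj_orig_orig {u v : V} (h : G.Adj u v) : (hGraph G).Adj (orig u) (orig v) := by
  rw [hAdj]; exact ⟨by simp [h.ne], Or.inl h⟩

lemma hAdj_orig_pend1 (v : V) : (hGraph G).Adj (orig v) (pend1 v) := by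
  rw [hAdj]; exact ⟨by simp, Or.inl rfl⟩

lemma hAdj_pend1_pend2 (v : V) : (hGraph G).Adj (pend1 v) (pend2 v) := by
  rw [hAdj]; exact ⟨by simp, Or.inl rfl⟩

lemma hAdj_pend1_star (v : V) : (hGraph G).Adj (pend1 v) star := by
  rw [hAdj]; exact ⟨by simp, Or.inl trivial⟩

lemma hAdj_star_starp : (hGraph (V := V) G).Adj star starp := by
  rw [hAdj]; exact ⟨by simp, Or.inl trivial⟩

lemma girth_cycle (h7 : 7 ≤ G.girth) {a : V} (w : G.Walk a a) (hw : w.IsCycle) :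
    7 ≤ w.length := by
  have he : (7 : ℕ∞) ≤ G.egirth := by
    rcases eq_or_ne G.egirth ⊤ with h | h
    · simp [h]
    · lift G.egirth to ℕ using h with n hn
      unfold SimpleGraph.girth at h7
      rw [← hn] at h7
      simp at h7
      exact_mod_cast h7
  exact_mod_cast SimpleGraph.le_egirth.mp he a w hw

lemma no3 (h7 : 7 ≤ G.girth) {a b c : V} (h1 : G.Adj a b) (h2 : G.Adj b c)
    (h3 : G.Adj c a) : False := by
  have hc : (SimpleGraph.Walk.cons h1 (.cons h2 (.cons h3 .nil))).IsCycle := by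
    simp [SimpleGraph.Walk.isCycle_def, SimpleGraph.Walk.isTrail_def, Sym2.eq, Sym2.rel_iff',
      List.pairwise_iff_forall_sublist]
    aesop
  have := girth_cycle h7 _ hc
  simp at this

lemma no4 (h7 : 7 ≤ G.girth) {a b c d : V} (h1 : G.Adj a b) (h2 : G.Adj b c)
    (h3 : G.Adj c d) (h4 : G.Adj d a) (hac : a ≠ c) (hbd : b ≠ d) : False := by
  have hc : (SimpleGraph.Walk.cons h1 (.cons h2 (.cons h3 (.cons h4 .nil)))).IsCycle := by
    simp [SimpleGraph.Walk.isCycle_def, SimpleGraph.Walk.isTrail_def, Sym2.eq, Sym2.rel_iff',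
      List.pairwise_iff_forall_sublist]
    aesop
  have := girth_cycle h7 _ hc
  simp at this

lemma no5 (h7 : 7 ≤ G.girth) {a b c d e : V} (h1 : G.Adj a b) (h2 : G.Adj b c)
    (h3 : G.Adj c d) (h4 : G.Adj d e) (h5 : G.Adj e a)
    (hac : a ≠ c) (had : a ≠ d) (hbd : b ≠ d) (hbe : b ≠ e) (hce : c ≠ e) : False := by
  have hc : (SimpleGraph.Walk.cons h1 (.cons h2 (.cons h3 (.cons h4
      (.cons h5 .nil))))).IsCycle := by
    simp [SimpleGraph.Walk.isCycle_def, SimpleGraph.Walk.isTrail_def, Sym2.eq, Sym2.rel_iff',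
      List.pairwise_iff_forall_sublist]
    aesop
  have := girth_cycle h7 _ hc
  simp at this

lemma no6 (h7 : 7 ≤ G.girth) {a b c d e f : V} (h1 : G.Adj a b) (h2 : G.Adj b c)
    (h3 : G.Adj c d) (h4 : G.Adj d e) (h5 : G.Adj e f) (h6 : G.Adj f a)
    (hac : a ≠ c) (had : a ≠ d) (hae : a ≠ e) (hbd : b ≠ d) (hbe : b ≠ e) (hbf : b ≠ f)
    (hce : c ≠ e) (hcf : c ≠ f) (hdf : d ≠ f) : False := by
  have hc : (SimpleGraph.Walk.cons h1 (.cons h2 (.cons h3 (.cons h4 (.cons h5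
      (.cons h6 .nil)))))).IsCycle := by
    simp [SimpleGraph.Walk.isCycle_def, SimpleGraph.Walk.isTrail_def, Sym2.eq, Sym2.rel_iff',
      List.pairwise_iff_forall_sublist]
    aesop
  have := girth_cycle h7 _ hc
  simp at this

lemma dist_helper {α : Type*} (G : SimpleGraph α) {x y : α} {n : ℕ} (w : G.Walk x y)
    (hw : w.length = n) (hlow : ∀ w' : G.Walk x y, n ≤ w'.length) : G.dist x y = n := by
  refine le_antisymm (hw ▸ SimpleGraph.dist_le w) ?_
  obtain ⟨w', hw'⟩ := SimpleGraph.Reachable.exists_walk_length_eq_dist ⟨w⟩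
  rw [← hw']
  exact hlow w'

/-! ### The pair `(starp, pend2 v)` -/

lemma low1 (v : V) (w : (hGraph G).Walk starp (pend2 v)) : 3 ≤ w.length := by
  cases w with
  | cons h q =>
    rename_i a
    cases a with
    | orig w => exact absurd h (by simp [hAdj, hRel])
    | pend1 w => exact absurd h (by simp [hAdj, hRel])
    | pend2 w => exact absurd h (by simp [hAdj, hRel])
    | starp => exact absurd h (by simp [hAdj, hRel])
    | star =>
      cases q with
      | cons h' q' =>
        rename_i b
        cases b with
        | orig w => exact absurd h' (by simp [hAdj, hRel])
        | pend2 w => exact absurd h' (by simp [hAdj, hRel])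
        | star => exact absurd h' (by simp [hAdj, hRel])
        | pend1 w =>
          cases q' with
          | cons h'' q'' => simp only [length_cons]; omega
        | starp =>
          cases q' with
          | cons h'' q'' => simp only [length_cons]; omega

lemma dist1 (v : V) : (hGraph G).dist starp (pend2 v) = 3 :=
  dist_helper _ (.cons hAdj_star_starp.symm (.cons (hAdj_pend1_star v).symm
    (.cons (hAdj_pend1_pend2 v) .nil))) rfl (low1 v)

lemma shape1 (v : V) (p : (hGraph G).Walk starp (pend2 v)) (hp : p.length = 3) :
    s(HV.star, HV.starp) ∈ p.edges ∧ s(HV.pend1 v, HV.star) ∈ p.edges ∧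
      s(HV.pend1 v, HV.pend2 v) ∈ p.edges := by
  cases p with
  | cons h q =>
    rename_i a
    cases a with
    | orig w => exact absurd h (by simp [hAdj, hRel])
    | pend1 w => exact absurd h (by simp [hAdj, hRel])
    | pend2 w => exact absurd h (by simp [hAdj, hRel])
    | starp => exact absurd h (by simp [hAdj, hRel])
    | star =>
      cases q with
      | cons h' q' =>
        rename_i b
        cases b with
        | orig w => exact absurd h' (by simp [hAdj, hRel])
        | pend2 w => exact absurd h' (by simp [hAdj, hRel])
        | star => exact absurd h' (by simp [hAdj, hRel])
        | pend1 w =>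
          cases q' with
          | cons h'' q'' =>
            cases q'' with
            | nil =>
              have hw : w = v := by
                have := (hAdj (G := G) _ _).mp h''
                simp [hRel] at this
                exact this
              subst hw
              simp [Sym2.eq, Sym2.rel_iff']
            | cons h3 q3 => simp at hp
        | starp =>
          cases q' with
          | cons h'' q'' =>
            rename_i c
            cases c with
            | orig w => exact absurd h'' (by simp [hAdj, hRel])
            | pend1 w => exact absurd h'' (by simp [hAdj, hRel])
            | pend2 w => exact absurd h'' (by simp [hAdj, hRel])
            | starp => exact absurd h'' (by simp [hAdj, hRel])
            | star =>
              cases q'' with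
              | cons h3 q3 => simp at hp

lemma mon1 (v : V) (e : Sym2 (HV V))
    (he : e = s(HV.star, HV.starp) ∨ e = s(HV.pend1 v, HV.star) ∨
      e = s(HV.pend1 v, HV.pend2 v)) :
    Monitors (hGraph G) starp (pend2 v) e := by
  refine ⟨by simp, fun p hp => ?_⟩
  rw [dist1] at hp
  obtain ⟨m1, m2, m3⟩ := shape1 v p hp
  rcases he with rfl | rfl | rfl <;> assumption

/-! ### The pair `(pend2 v, orig v)` -/

lemma low2a (v : V) (w : (hGraph G).Walk (pend2 v) (orig v)) : 2 ≤ w.length := by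
  cases w with
  | cons h q =>
    cases q with
    | nil => exact absurd h (by simp [hAdj, hRel])
    | cons h' q' => simp only [length_cons]; omega

lemma dist2a (v : V) : (hGraph G).dist (pend2 v) (orig v) = 2 :=
  dist_helper _ (.cons (hAdj_pend1_pend2 v).symm (.cons (hAdj_orig_pend1 v).symm .nil))
    rfl (low2a v)

lemma shape2a (v : V) (p : (hGraph G).Walk (pend2 v) (orig v)) (hp : p.length = 2) :
    s(HV.orig v, HV.pend1 v) ∈ p.edges := by
  cases p with
  | cons h q =>
    rename_i a
    cases a with
    | orig w => exact absurd h (by simp [hAdj, hRel])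
    | pend2 w => exact absurd h (by simp [hAdj, hRel])
    | star => exact absurd h (by simp [hAdj, hRel])
    | starp => exact absurd h (by simp [hAdj, hRel])
    | pend1 w =>
      have hw : w = v := by
        have := (hAdj (G := G) _ _).mp h
        simp [hRel] at this
        first | exact this | exact this.symm
      subst hw
      cases q with
      | cons h' q' =>
        cases q' with
        | nil => simp [Sym2.eq, Sym2.rel_iff']
        | cons h'' q'' => simp at hp

lemma mon2a (v : V) : Monitors (hGraph G) (pend2 v) (orig v) s(HV.orig v, HV.pend1 v) := by
  refine ⟨by simp, fun p hp => ?_⟩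
  rw [dist2a] at hp
  exact shape2a v p hp

/-! ### The pair `(pend2 v, orig d)`, `d` a neighbour of `v` -/

lemma low2b {v d : V} (hvd : v ≠ d) (w : (hGraph G).Walk (pend2 v) (orig d)) :
    3 ≤ w.length := by
  cases w with
  | cons h q =>
    rename_i a
    cases a with
    | orig w => exact absurd h (by simp [hAdj, hRel])
    | pend2 w => exact absurd h (by simp [hAdj, hRel])
    | star => exact absurd h (by simp [hAdj, hRel])
    | starp => exact absurd h (by simp [hAdj, hRel])
    | pend1 w =>
      cases q with
      | cons h' q' =>
        cases q' with
        | nil =>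
          exfalso
          have h1 := (hAdj (G := G) _ _).mp h
          have h2 := (hAdj (G := G) _ _).mp h'
          simp [hRel] at h1 h2
          aesop
        | cons h'' q'' => simp only [length_cons]; omega

lemma dist2b {v d : V} (hadj : G.Adj v d) : (hGraph G).dist (pend2 v) (orig d) = 3 :=
  dist_helper _ (.cons (hAdj_pend1_pend2 v).symm (.cons (hAdj_orig_pend1 v).symm
    (.cons (hAdj_orig_orig hadj) .nil))) rfl (low2b hadj.ne)

lemma shape2b {v d : V} (hvd : v ≠ d) (p : (hGraph G).Walk (pend2 v) (orig d))
    (hp : p.length = 3) :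
    s(HV.orig v, HV.pend1 v) ∈ p.edges ∧ s(HV.orig v, HV.orig d) ∈ p.edges := by
  cases p with
  | cons h q =>
    rename_i a
    cases a with
    | orig w => exact absurd h (by simp [hAdj, hRel])
    | pend2 w => exact absurd h (by simp [hAdj, hRel])
    | star => exact absurd h (by simp [hAdj, hRel])
    | starp => exact absurd h (by simp [hAdj, hRel])
    | pend1 w =>
      have hw : w = v := by
        have := (hAdj (G := G) _ _).mp h
        simp [hRel] at this
        first | exact this | exact this.symm
      subst hw
      cases q with
      | cons h' q' =>
        rename_i b
        cases b with
        | pend1 w2 => exact absurd h' (by simp [hAdj, hRel])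
        | starp => exact absurd h' (by simp [hAdj, hRel])
        | pend2 w2 =>
          cases q' with
          | cons h'' q'' =>
            cases q'' with
            | nil => exact absurd h'' (by simp [hAdj, hRel])
            | cons h3 q3 => simp at hp
        | star =>
          cases q' with
          | cons h'' q'' =>
            cases q'' with
            | nil => exact absurd h'' (by simp [hAdj, hRel])
            | cons h3 q3 => simp at hp
        | orig w2 =>
          have hw2 : w2 = w := by
            have := (hAdj (G := G) _ _).mp h'
            simp [hRel] at this
            first | exact this | exact this.symm
          subst hw2
          cases q' with
          | nil => simp at hp
          | cons h'' q'' =>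
            cases q'' with
            | nil => simp [Sym2.eq, Sym2.rel_iff']
            | cons h3 q3 => simp at hp

lemma mon2b {v d : V} (hadj : G.Adj v d) (e : Sym2 (HV V))
    (he : e = s(HV.orig v, HV.pend1 v) ∨ e = s(HV.orig v, HV.orig d)) :
    Monitors (hGraph G) (pend2 v) (orig d) e := by
  refine ⟨by simp, fun p hp => ?_⟩
  rw [dist2b hadj] at hp
  obtain ⟨m1, m2⟩ := shape2b hadj.ne p hp
  rcases he with rfl | rfl <;> assumption

end Aux
section Hard

open SimpleGraph Walk HV

variable {V : Type*} {G : SimpleGraph V}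

variable {d1 u v d2 : V} (h7 : 7 ≤ G.girth) (hd1u : G.Adj d1 u) (huv : G.Adj u v)
  (hvd2 : G.Adj v d2) (hud2 : u ≠ d2) (hvd1 : v ≠ d1)

omit h7 hd1u huv hvd2 hud2 hvd1 in
lemma hAdj_orig_iff {a b : V} : (hGraph G).Adj (orig a) (orig b) ↔ G.Adj a b := by
  rw [hAdj]
  constructor
  · rintro ⟨hne, h | h⟩
    · exact h
    · exact h.symm
  · exact fun h => ⟨by simp [h.ne], Or.inl h⟩

include h7 hd1u huv hvd2 hud2 hvd1

lemma hne12 : d1 ≠ d2 := by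
  rintro rfl
  exact no3 h7 hd1u huv hvd2

lemma hnadj12 : ¬ G.Adj d1 d2 := by
  intro h
  exact no4 h7 hd1u huv hvd2 h.symm (Ne.symm hvd1) hud2

lemma hno2step : ∀ w : V, ¬ (G.Adj d1 w ∧ G.Adj w d2) := by
  rintro w ⟨h1, h2⟩
  by_cases hwu : w = u
  · subst hwu
    exact no3 h7 huv hvd2 h2.symm
  by_cases hwv : w = v
  · subst hwv
    exact no3 h7 hd1u huv h1.symm
  exact no5 h7 hd1u huv hvd2 h2.symm h1.symm (Ne.symm hvd1) (hne12 h7 hd1u huv hvd2 hud2 hvd1)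
    hud2 (fun h => hwu h.symm) (fun h => hwv h.symm)

lemma low3 (w : (hGraph G).Walk (orig d1) (orig d2)) : 3 ≤ w.length := by
  cases w with
  | nil => exact absurd rfl (hne12 h7 hd1u huv hvd2 hud2 hvd1)
  | cons h q =>
    rename_i a
    cases a with
    | pend2 w2 => exact absurd h (by simp [hAdj, hRel])
    | star => exact absurd h (by simp [hAdj, hRel])
    | starp => exact absurd h (by simp [hAdj, hRel])
    | pend1 w2 =>
      cases q with
      | cons h' q' =>
        cases q' with
        | nil =>
          exfalso
          have h1 := (hAdj (G := G) _ _).mp h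
          have h2 := (hAdj (G := G) _ _).mp h'
          simp [hRel] at h1 h2
          exact hne12 h7 hd1u huv hvd2 hud2 hvd1 (by aesop)
        | cons h'' q'' => simp only [length_cons]; omega
    | orig w2 =>
      have hadj1 : G.Adj d1 w2 := hAdj_orig_iff.mp h
      cases q with
      | nil => exact absurd hadj1 (hnadj12 h7 hd1u huv hvd2 hud2 hvd1)
      | cons h' q' =>
        cases q' with
        | nil =>
          have hadj2 : G.Adj w2 d2 := hAdj_orig_iff.mp h'
          exact absurd ⟨hadj1, hadj2⟩ (hno2step h7 hd1u huv hvd2 hud2 hvd1 w2)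
        | cons h'' q'' => simp only [length_cons]; omega

lemma dist3 : (hGraph G).dist (orig d1) (orig d2) = 3 :=
  dist_helper _ (.cons (hAdj_orig_orig hd1u) (.cons (hAdj_orig_orig huv)
    (.cons (hAdj_orig_orig hvd2) .nil))) rfl (low3 h7 hd1u huv hvd2 hud2 hvd1)

lemma shape3 (p : (hGraph G).Walk (orig d1) (orig d2)) (hp : p.length = 3) :
    s(HV.orig u, HV.orig v) ∈ p.edges := by
  have hnadj := hnadj12 h7 hd1u huv hvd2 hud2 hvd1
  cases p with
  | nil => simp at hp
  | cons h q =>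
    rename_i a
    cases a with
    | pend2 w2 => exact absurd h (by simp [hAdj, hRel])
    | star => exact absurd h (by simp [hAdj, hRel])
    | starp => exact absurd h (by simp [hAdj, hRel])
    | pend1 w2 =>
      have hw : d1 = w2 := by
        have := (hAdj (G := G) _ _).mp h
        simp [hRel] at this
        first | exact this | exact this.symm
      subst hw
      cases q with
      | cons h' q' =>
        rename_i b
        cases b with
        | pend1 w3 => exact absurd h' (by simp [hAdj, hRel])
        | starp => exact absurd h' (by simp [hAdj, hRel])
        | orig w3 =>
          have hw3 : d1 = w3 := by
            have := (hAdj (G := G) _ _).mp h'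
            simp [hRel] at this
            first | exact this | exact this.symm
          subst hw3
          cases q' with
          | nil => simp at hp
          | cons h'' q'' =>
            cases q'' with
            | nil =>
              exfalso
              have : G.Adj d1 d2 := hAdj_orig_iff.mp h''
              exact hnadj this
            | cons h3 q3 => simp at hp
        | pend2 w3 =>
          cases q' with
          | cons h'' q'' =>
            cases q'' with
            | nil => exact absurd h'' (by simp [hAdj, hRel])
            | cons h3 q3 => simp at hp
        | star =>
          cases q' with
          | cons h'' q'' =>
            cases q'' with
            | nil => exact absurd h'' (by simp [hAdj, hRel])
            | cons h3 q3 => simp at hp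
    | orig u1 =>
      have hadj1 : G.Adj d1 u1 := hAdj_orig_iff.mp h
      cases q with
      | nil => exact absurd hadj1 hnadj
      | cons h' q' =>
        rename_i b
        cases b with
        | star => exact absurd h' (by simp [hAdj, hRel])
        | starp => exact absurd h' (by simp [hAdj, hRel])
        | pend2 w3 => exact absurd h' (by simp [hAdj, hRel])
        | pend1 w3 =>
          have hw3 : u1 = w3 := by
            have := (hAdj (G := G) _ _).mp h'
            simp [hRel] at this
            first | exact this | exact this.symm
          subst hw3
          cases q' with
          | cons h'' q'' =>
            cases q'' with
            | nil =>
              exfalso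
              have : u1 = d2 := by
                have := (hAdj (G := G) _ _).mp h''
                simp [hRel] at this
                first | exact this | exact this.symm
              subst this
              exact hnadj hadj1
            | cons h3 q3 => simp at hp
        | orig w3 =>
          have hadj2 : G.Adj u1 w3 := hAdj_orig_iff.mp h'
          cases q' with
          | nil =>
            exact absurd ⟨hadj1, hadj2⟩ (hno2step h7 hd1u huv hvd2 hud2 hvd1 u1)
          | cons h'' q'' =>
            cases q'' with
            | cons h3 q3 => simp at hp
            | nil =>
              have hadj3 : G.Adj w3 d2 := hAdj_orig_iff.mp h''
              -- combinatorial core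
              have hkey : u1 = u ∧ w3 = v := by
                by_cases hu1 : u1 = u
                · subst hu1
                  refine ⟨rfl, ?_⟩
                  by_contra hw3v
                  exact no4 h7 huv hvd2 hadj3.symm hadj2.symm hud2
                    (fun hh => hw3v hh.symm)
                · exfalso
                  by_cases hu1v : u1 = v
                  · subst hu1v
                    exact no3 h7 hd1u huv hadj1.symm
                  by_cases hw3u : w3 = u
                  · subst hw3u
                    exact no3 h7 huv hvd2 hadj3.symm
                  by_cases hw3v : w3 = v
                  · subst hw3v
                    exact no4 h7 hd1u huv hadj2.symm hadj1.symm (Ne.symm hvd1)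
                      (fun hh => hu1 hh.symm)
                  have hw3d1 : w3 ≠ d1 := by
                    rintro rfl
                    exact hnadj hadj3
                  have hu1d2 : u1 ≠ d2 := by
                    rintro rfl
                    exact hnadj hadj1
                  exact no6 h7 hd1u huv hvd2 hadj3.symm hadj2.symm hadj1.symm
                    (Ne.symm hvd1) (hne12 h7 hd1u huv hvd2 hud2 hvd1)
                    (fun hh => hw3d1 hh.symm) hud2 (fun hh => hw3u hh.symm)
                    (fun hh => hu1 hh.symm) (fun hh => hw3v hh.symm)
                    (fun hh => hu1v hh.symm) (fun hh => hu1d2 hh.symm)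
              obtain ⟨rfl, rfl⟩ := hkey
              simp [Sym2.eq, Sym2.rel_iff']

lemma mon3 : Monitors (hGraph G) (orig d1) (orig d2) s(HV.orig u, HV.orig v) := by
  refine ⟨by simp [hne12 h7 hd1u huv hvd2 hud2 hvd1], fun p hp => ?_⟩
  rw [dist3 h7 hd1u huv hvd2 hud2 hvd1] at hp
  exact shape3 h7 hd1u huv hvd2 hud2 hvd1 p hp

end Hard
section Main

open SimpleGraph Walk HV

instance hvFinite {V : Type*} [Finite V] : Finite (HV V) := by
  have hsurj : Function.Surjective (fun x : V ⊕ V ⊕ V ⊕ Bool =>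
      match x with
      | .inl v => HV.orig v
      | .inr (.inl v) => HV.pend1 v
      | .inr (.inr (.inl v)) => HV.pend2 v
      | .inr (.inr (.inr true)) => HV.star
      | .inr (.inr (.inr false)) => HV.starp) := by
    intro x
    cases x with
    | orig v => exact ⟨.inl v, rfl⟩
    | pend1 v => exact ⟨.inr (.inl v), rfl⟩
    | pend2 v => exact ⟨.inr (.inr (.inl v)), rfl⟩
    | star => exact ⟨.inr (.inr (.inr true)), rfl⟩
    | starp => exact ⟨.inr (.inr (.inr false)), rfl⟩
  exact Finite.of_surjective _ hsurj

/-- If `D` is a dominating set of `G` (girth ≥ 7, at least two vertices) of size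
at most `k`, then `M = D ∪ L'' ∪ {v*'}` is a MEG-set of `H` of size at most
`k + |V(G)| + 1`. -/
theorem dominatingSet_to_megset {V : Type*} [Fintype V] [DecidableEq V]
    (G : SimpleGraph V) (hcard : 2 ≤ Fintype.card V) (hgirth : 7 ≤ G.girth)
    (k : ℕ) (D : Finset V)
    (hdom : ∀ v : V, v ∈ D ∨ ∃ u ∈ D, G.Adj u v)
    (hk : D.card ≤ k) :
    IsMEGSet (hGraph G) ((HV.orig '' (D : Set V)) ∪ Lpp V ∪ {HV.starp}) ∧
    ((HV.orig '' (D : Set V)) ∪ Lpp V ∪ {HV.starp} : Set (HV V)).ncard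
      ≤ k + Fintype.card V + 1 := by
  have hne : Nonempty V := Fintype.card_pos_iff.mp (by omega)
  set M : Set (HV V) := (HV.orig '' (D : Set V)) ∪ Lpp V ∪ {HV.starp} with hM
  have hstarp : HV.starp ∈ M := Or.inr rfl
  have hpend2 : ∀ v : V, HV.pend2 v ∈ M := fun v => Or.inl (Or.inr ⟨v, rfl⟩)
  have horig : ∀ d ∈ D, HV.orig d ∈ M := fun d hd => Or.inl (Or.inl ⟨d, hd, rfl⟩)
  constructor
  · intro e he
    induction e using Sym2.ind with
    | _ a b =>
    rw [SimpleGraph.mem_edgeSet] at he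
    cases a <;> cases b
    all_goals try (exfalso; simpa [hAdj, hRel] using he)
    case orig.orig u v =>
      have he' : G.Adj u v := hAdj_orig_iff.mp he
      by_cases huD : u ∈ D
      · refine ⟨HV.pend2 v, hpend2 v, HV.orig u, horig u huD, ?_⟩
        rw [Sym2.eq_swap]
        exact mon2b he'.symm _ (Or.inr rfl)
      · by_cases hvD : v ∈ D
        · exact ⟨HV.pend2 u, hpend2 u, HV.orig v, horig v hvD,
            mon2b he' _ (Or.inr rfl)⟩
        · obtain ⟨d1, hd1D, hd1⟩ := (hdom u).resolve_left huD
          obtain ⟨d2, hd2D, hd2⟩ := (hdom v).resolve_left hvD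
          have hud2 : u ≠ d2 := fun h => huD (h ▸ hd2D)
          have hvd1 : v ≠ d1 := fun h => hvD (h ▸ hd1D)
          exact ⟨HV.orig d1, horig d1 hd1D, HV.orig d2, horig d2 hd2D,
            mon3 hgirth hd1 he' hd2.symm hud2 hvd1⟩
    case orig.pend1 u w =>
      have huw : u = w := by
        have := (hAdj (G := G) _ _).mp he
        simp [hRel] at this
        first | exact this | exact this.symm
      subst huw
      rcases hdom u with huD | ⟨d, hdD, hdadj⟩
      · exact ⟨HV.pend2 u, hpend2 u, HV.orig u, horig u huD, mon2a u⟩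
      · exact ⟨HV.pend2 u, hpend2 u, HV.orig d, horig d hdD,
          mon2b hdadj.symm _ (Or.inl rfl)⟩
    case pend1.orig w u =>
      have huw : u = w := by
        have := (hAdj (G := G) _ _).mp he
        simp [hRel] at this
        first | exact this | exact this.symm
      subst huw
      rcases hdom u with huD | ⟨d, hdD, hdadj⟩
      · refine ⟨HV.pend2 u, hpend2 u, HV.orig u, horig u huD, ?_⟩
        rw [Sym2.eq_swap]
        exact mon2a u
      · refine ⟨HV.pend2 u, hpend2 u, HV.orig d, horig d hdD, ?_⟩
        rw [Sym2.eq_swap]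
        exact mon2b hdadj.symm _ (Or.inl rfl)
    case pend1.pend2 v w =>
      have hvw : v = w := by
        have := (hAdj (G := G) _ _).mp he
        simp [hRel] at this
        first | exact this | exact this.symm
      subst hvw
      exact ⟨HV.starp, hstarp, HV.pend2 v, hpend2 v, mon1 v _ (Or.inr (Or.inr rfl))⟩
    case pend2.pend1 w v =>
      have hvw : v = w := by
        have := (hAdj (G := G) _ _).mp he
        simp [hRel] at this
        first | exact this | exact this.symm
      subst hvw
      refine ⟨HV.starp, hstarp, HV.pend2 v, hpend2 v, ?_⟩
      rw [Sym2.eq_swap]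
      exact mon1 v _ (Or.inr (Or.inr rfl))
    case pend1.star v =>
      exact ⟨HV.starp, hstarp, HV.pend2 v, hpend2 v, mon1 v _ (Or.inr (Or.inl rfl))⟩
    case star.pend1 v =>
      refine ⟨HV.starp, hstarp, HV.pend2 v, hpend2 v, ?_⟩
      rw [Sym2.eq_swap]
      exact mon1 v _ (Or.inr (Or.inl rfl))
    case star.starp =>
      obtain ⟨v⟩ := hne
      exact ⟨HV.starp, hstarp, HV.pend2 v, hpend2 v, mon1 v _ (Or.inl rfl)⟩
    case starp.star =>
      obtain ⟨v⟩ := hne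
      refine ⟨HV.starp, hstarp, HV.pend2 v, hpend2 v, ?_⟩
      rw [Sym2.eq_swap]
      exact mon1 v _ (Or.inl rfl)
  · have h1 : (HV.orig '' (D : Set V)).ncard ≤ k := by
      calc (HV.orig '' (D : Set V)).ncard ≤ (D : Set V).ncard := Set.ncard_image_le D.finite_toSet
        _ = D.card := Set.ncard_coe_finset D
        _ ≤ k := hk
    have h2 : (Lpp V).ncard = Fintype.card V := by
      have hL : Lpp V = Set.range (HV.pend2 : V → HV V) := by
        ext x
        simp [Lpp, Set.range, eq_comm]
      have hinj : Function.Injective (HV.pend2 : V → HV V) := by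
        intro a b h
        injection h
      rw [hL, ← Set.image_univ, Set.ncard_image_of_injective _ hinj, Set.ncard_univ,
        Nat.card_eq_fintype_card]
    have h3 : ({HV.starp} : Set (HV V)).ncard = 1 := Set.ncard_singleton _
    calc ((HV.orig '' (D : Set V)) ∪ Lpp V ∪ {HV.starp}).ncard
        ≤ ((HV.orig '' (D : Set V)) ∪ Lpp V).ncard + ({HV.starp} : Set (HV V)).ncard :=
          Set.ncard_union_le _ _
      _ ≤ (HV.orig '' (D : Set V)).ncard + (Lpp V).ncard + ({HV.starp} : Set (HV V)).ncard := by
          have := Set.ncard_union_le (HV.orig '' (D : Set V)) (Lpp V)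
          omega
      _ ≤ k + Fintype.card V + 1 := by omega

end Main
end

section
/- Let C be a cluster of a weighted graph G with projection graph H. For every walk π between two vertices u,v ∈ C ∪ δC in H, there exists a walk π' between u and v in G with the same total weight and with the same set of non-projection edges. -/
/-- The total weight of a walk: the sum of the weights of its edges. -/
def walkWeight {V : Type*} {G : SimpleGraph V} (w : Sym2 V → ℝ) {u v : V}
    (p : G.Walk u v) : ℝ :=
  (p.edges.map w).sum

/-- `p` is a weighted shortest path: a path whose weight is at most the
weight of any other path with the same endpoints. -/
def IsShortestW {V : Type*} (G : SimpleGraph V) (w : Sym2 V → ℝ) {u v : V}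
    (p : G.Walk u v) : Prop :=
  p.IsPath ∧ ∀ q : G.Walk u v, q.IsPath → walkWeight w p ≤ walkWeight w q

/-- Edge `e` is monitored by the pair `x, y` in the weighted graph `(G, w)` if
`x ≠ y` and `e` lies on every weighted shortest path between `x` and `y`. -/
def MonitorsW {V : Type*} (G : SimpleGraph V) (w : Sym2 V → ℝ) (x y : V)
    (e : Sym2 V) : Prop :=
  x ≠ y ∧ ∀ p : G.Walk x y, IsShortestW G w p → e ∈ p.edges

/-- The boundary `δC` of a cluster `C`: vertices outside `C` with a neighbor in `C`. -/
def boundary {V : Type*} (G : SimpleGraph V) (C : Set V) : Set V :=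
  {v | v ∉ C ∧ ∃ u ∈ C, G.Adj u v}

/-- A `C`-bypass: a weighted shortest path of `G` between two boundary vertices,
with at least two edges, all of whose internal vertices lie outside `C ∪ δC`. -/
def IsBypass {V : Type*} (G : SimpleGraph V) (w : Sym2 V → ℝ) (C : Set V)
    {u v : V} (p : G.Walk u v) : Prop :=
  u ∈ boundary G C ∧ v ∈ boundary G C ∧ IsShortestW G w p ∧ 2 ≤ p.length ∧
    ∀ x ∈ p.support, x ≠ u → x ≠ v → x ∉ C ∪ boundary G C

/-- `(H, wH)` is the projection of the cluster `C` of `(G, w)`: its edges are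
the edges of `G[C ∪ δC]` (with their original weights) together with a
projection edge, weighted by the `G`-distance (the weight of an associated
`C`-bypass), for each pair of boundary vertices joined by a `C`-bypass. -/
def IsProjection {V : Type*} (G : SimpleGraph V) (w : Sym2 V → ℝ) (C : Set V)
    (H : SimpleGraph V) (wH : Sym2 V → ℝ) : Prop :=
  (∀ u v : V, H.Adj u v ↔
      ((G.Adj u v ∧ u ∈ C ∪ boundary G C ∧ v ∈ C ∪ boundary G C) ∨
       (u ≠ v ∧ ∃ p : G.Walk u v, IsBypass G w C p))) ∧
  (∀ e ∈ G.edgeSet ∩ H.edgeSet, wH e = w e) ∧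
  (∀ u v : V, H.Adj u v → ¬ G.Adj u v →
      ∃ p : G.Walk u v, IsBypass G w C p ∧ wH s(u, v) = walkWeight w p)

/-!
Induct on the walk in `H`. An edge of `G[C ∪ δC]` is kept as it is; a projection
edge `(a, b)` is replaced by its bypass, which has the same weight. No edge of the
bypass is an edge of `H`: the internal vertices of the bypass lie outside `C ∪ δC`,
so such an edge would join `a` and `b`, and a path with at least two edges does not
contain the edge between its endpoints. Hence the replacement neither adds nor
removes non-projection edges.
-/

open SimpleGraph

section WalkWeight

variable {V : Type*} {G : SimpleGraph V} (w : Sym2 V → ℝ)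

@[simp]
lemma walkWeight_nil {u : V} : walkWeight w (Walk.nil : G.Walk u u) = 0 := by
  simp [walkWeight]

@[simp]
lemma walkWeight_cons {a b c : V} (h : G.Adj a b) (p : G.Walk b c) :
    walkWeight w (Walk.cons h p) = w s(a, b) + walkWeight w p := by
  simp [walkWeight]

@[simp]
lemma walkWeight_append {a b c : V} (p : G.Walk a b) (q : G.Walk b c) :
    walkWeight w (p.append q) = walkWeight w p + walkWeight w q := by
  simp [walkWeight]

end WalkWeight

namespace IsProjection

variable {V : Type*} {G : SimpleGraph V} {w : Sym2 V → ℝ} {C : Set V}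
  {H : SimpleGraph V} {wH : Sym2 V → ℝ}

lemma mem_of_adj (hproj : IsProjection G w C H wH) {x y : V} (h : H.Adj x y) :
    x ∈ C ∪ boundary G C ∧ y ∈ C ∪ boundary G C := by
  rcases (hproj.1 x y).mp h with ⟨_, hx, hy⟩ | ⟨_, _, hb⟩
  · exact ⟨hx, hy⟩
  · exact ⟨Or.inr hb.1, Or.inr hb.2.1⟩

lemma notMem_edgeSet_of_mem_bypass (hproj : IsProjection G w C H wH) {a b : V}
    {p : G.Walk a b} (hb : IsBypass G w C p) {e : Sym2 V} (he : e ∈ p.edges) :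
    e ∉ H.edgeSet := by
  obtain ⟨-, -, ⟨hpath, -⟩, hlen, hinner⟩ := hb
  induction e using Sym2.ind with
  | _ x y =>
    intro (hxy : H.Adj x y)
    have hends : ∀ z ∈ p.support, z ∈ C ∪ boundary G C → z = a ∨ z = b := by
      intro z hz hzC
      by_contra! hne
      exact hinner z hz hne.1 hne.2 hzC
    have hab : s(x, y) = s(a, b) := by
      rcases hends x (p.fst_mem_support_of_mem_edges he) (hproj.mem_of_adj hxy).1
        with rfl | rfl <;>
      rcases hends y (p.snd_mem_support_of_mem_edges he) (hproj.mem_of_adj hxy).2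
        with rfl | rfl
      all_goals first | exact absurd rfl hxy.ne | exact Sym2.eq_swap | rfl
    have := hpath.length_eq_one_of_mem_edges (hab ▸ he)
    omega

lemma exists_walk_of_walk (hproj : IsProjection G w C H wH) {u v : V}
    (p : H.Walk u v) :
    ∃ q : G.Walk u v, walkWeight wH p = walkWeight w q ∧
      ∀ e ∈ G.edgeSet ∩ H.edgeSet, e ∈ p.edges ↔ e ∈ q.edges := by
  induction p with
  | nil => exact ⟨Walk.nil, by simp, fun _ _ => Iff.rfl⟩
  | @cons a b c hH p ih =>
    obtain ⟨q, hwq, hq⟩ := ih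
    by_cases hG : G.Adj a b
    · refine ⟨Walk.cons hG q, ?_, fun e he => ?_⟩
      · rw [walkWeight_cons, walkWeight_cons, hwq, hproj.2.1 s(a, b) ⟨hG, hH⟩]
      · simp only [Walk.edges_cons, List.mem_cons, hq e he]
    · obtain ⟨b', hb', hwb'⟩ := hproj.2.2 a b hH hG
      refine ⟨b'.append q, ?_, fun e he => ?_⟩
      · rw [walkWeight_cons, walkWeight_append, hwq, hwb']
      · have hne : e ≠ s(a, b) := by rintro rfl; exact hG he.1
        have hnb : e ∉ b'.edges := fun h => hproj.notMem_edgeSet_of_mem_bypass hb' h he.2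
        simp only [Walk.edges_cons, Walk.edges_append, List.mem_cons, List.mem_append,
          hq e he, hne, hnb, false_or]

end IsProjection

theorem projection_walk_to_graph_walk_general {V : Type*}
    (G : SimpleGraph V) (w : Sym2 V → ℝ)
    (C : Set V) (H : SimpleGraph V) (wH : Sym2 V → ℝ)
    (hproj : IsProjection G w C H wH)
    (u v : V)
    (p : H.Walk u v) :
    ∃ q : G.Walk u v, walkWeight wH p = walkWeight w q ∧
      {e | e ∈ p.edges} ∩ (G.edgeSet ∩ H.edgeSet)
        = {e | e ∈ q.edges} ∩ (G.edgeSet ∩ H.edgeSet) := by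
  obtain ⟨q, hweight, hedges⟩ := hproj.exists_walk_of_walk p
  refine ⟨q, hweight, Set.ext fun e => ?_⟩
  exact ⟨fun ⟨hp, he⟩ => ⟨(hedges e he).1 hp, he⟩,
    fun ⟨hq, he⟩ => ⟨(hedges e he).2 hq, he⟩⟩

/-- Every walk between `u, v ∈ C ∪ δC` in the projection graph `H` yields a walk
between `u` and `v` in `G` with the same total weight and the same set of
non-projection edges. -/
theorem projection_walk_to_graph_walk {V : Type*} [Fintype V]
    (G : SimpleGraph V) (w : Sym2 V → ℝ) (hw : ∀ e, 0 ≤ w e)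
    (C : Set V) (H : SimpleGraph V) (wH : Sym2 V → ℝ)
    (hproj : IsProjection G w C H wH)
    (u v : V) (hu : u ∈ C ∪ boundary G C) (hv : v ∈ C ∪ boundary G C)
    (p : H.Walk u v) :
    ∃ q : G.Walk u v, walkWeight wH p = walkWeight w q ∧
      {e | e ∈ p.edges} ∩ (G.edgeSet ∩ H.edgeSet)
        = {e | e ∈ q.edges} ∩ (G.edgeSet ∩ H.edgeSet) :=
  projection_walk_to_graph_walk_general G w C H wH hproj u v p
end

section
/- Suppose a graph class admits α-balanced separators of size at most β₀·n^β with β > 0, and at each internal node u of the decomposition (with optimal solution cost c(M*) and children of sizes at most (1−α)n_u) the algorithm returns the cheaper of (i) a solution of cost at most β₀·n_u^β + c(M*)·ρ(h−1,(1−α)n_u) and (ii) a solution of cost at most 2·c(M*)²·ln n. If ρ(h,x) = x^{β/2}·√(2β₀ ln n)/(1−(1−α)^{β/2}) and ρ(0,x)=1 is achieved at leaves, then by induction on h the returned solution at any node of height h and size n_u has cost at most c(M*)·ρ(h, n_u). -/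
/-- Inductive analysis of the separator-based algorithm when `β > 0`.
With `ρ h x = x^(β/2) · √(2β₀ ln n) / (1 - (1-α)^(β/2))`, if at leaves
(`h = 0`) the returned cost is at most the optimum `copt` (ratio `ρ(0,x) = 1`),
and at an internal node of height `h+1` and size `x` the algorithm returns the
cheaper of a solution of cost at most `β₀·x^β + copt·ρ(h, (1-α)·x)` and one of
cost at most `2·copt²·ln n`, then the cost returned at any node of height `h`
and size `x` is at most `copt · ρ(h, x)`. -/
theorem separator_algorithm_cost_bound (n : ℕ) (hn : 2 ≤ n)
    (α β₀ β : ℝ) (hα0 : 0 < α) (hα : α < 1 / 2) (hβ₀ : 1 ≤ β₀) (hβ : 0 < β)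
    (ρ : ℕ → ℝ → ℝ)
    (hρ : ∀ (h : ℕ) (x : ℝ), ρ h x =
      x ^ (β / 2) * Real.sqrt (2 * β₀ * Real.log n) / (1 - (1 - α) ^ (β / 2)))
    (cost : ℕ → ℝ → ℝ → ℝ)
    (hbase : ∀ x copt : ℝ, 1 ≤ x → 1 ≤ copt → cost 0 x copt ≤ copt)
    (hstep : ∀ (h : ℕ) (x copt : ℝ), 1 ≤ x → 1 ≤ copt →
      cost (h + 1) x copt ≤
        min (β₀ * x ^ β + copt * ρ h ((1 - α) * x)) (2 * copt ^ 2 * Real.log n)) :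
    ∀ (h : ℕ) (x copt : ℝ), 1 ≤ x → 1 ≤ copt →
      cost h x copt ≤ copt * ρ h x := by
  intro h x copt hx hc
  set L := Real.log n with hLdef
  have hL2 : Real.log 2 ≤ L := by
    apply Real.log_le_log (by norm_num)
    exact_mod_cast hn
  have hlog2 : (0.6931471803 : ℝ) < Real.log 2 := Real.log_two_gt_d9
  have hLpos : 0 < L := by linarith
  set S := Real.sqrt (2 * β₀ * L) with hSdef
  have hS0 : 0 ≤ S := Real.sqrt_nonneg _
  have hS1 : 1 ≤ S := by
    rw [hSdef, show (1:ℝ) = Real.sqrt 1 by simp]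
    apply Real.sqrt_le_sqrt
    nlinarith
  have hSsq : S ^ 2 = 2 * β₀ * L := Real.sq_sqrt (by nlinarith)
  have h1α : 0 < 1 - α := by linarith
  set q := (1 - α) ^ (β / 2) with hqdef
  have hq0 : 0 < q := Real.rpow_pos_of_pos h1α _
  have hq1 : q < 1 := Real.rpow_lt_one (by linarith) (by linarith) (by positivity)
  have hD : 0 < 1 - q := by linarith
  have hx0 : 0 < x := by linarith
  have hxp : 0 < x ^ (β / 2) := Real.rpow_pos_of_pos hx0 _
  have hxp1 : 1 ≤ x ^ (β / 2) := by
    calc (1:ℝ) = 1 ^ (β / 2) := by rw [Real.one_rpow]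
    _ ≤ x ^ (β / 2) := Real.rpow_le_rpow (by norm_num) hx (by positivity)
  have hcpos : 0 < copt := by linarith
  cases h with
  | zero =>
    refine (hbase x copt hx hc).trans ?_
    rw [hρ]
    rw [show copt * (x ^ (β / 2) * S / (1 - q)) = copt * ((x ^ (β / 2) * S) / (1 - q)) by ring]
    nth_rewrite 1 [show copt = copt * 1 by ring]
    apply mul_le_mul_of_nonneg_left _ (le_of_lt hcpos)
    rw [le_div_iff₀ hD]
    nlinarith
  | succ h =>
    refine (hstep h x copt hx hc).trans ?_
    rw [hρ, hρ]
    have hxβ : (x ^ (β / 2)) ^ 2 = x ^ β := by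
      rw [sq, ← Real.rpow_add hx0]; ring_nf
    have hmr : ((1 - α) * x) ^ (β / 2) = q * x ^ (β / 2) := by
      rw [Real.mul_rpow (le_of_lt h1α) (le_of_lt hx0)]
    set A := β₀ * x ^ β with hAdef
    set B := 2 * copt ^ 2 * L with hBdef
    have hA0 : 0 ≤ A := by
      rw [hAdef]
      have : 0 < x ^ β := Real.rpow_pos_of_pos hx0 _
      nlinarith
    have hB0 : 0 ≤ B := by rw [hBdef]; nlinarith
    set C := copt * (((1 - α) * x) ^ (β / 2) * S / (1 - q)) with hCdef
    have hC0 : 0 ≤ C := by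
      rw [hCdef, hmr]
      positivity
    have step1 : min (A + C) B ≤ min A B + C := by
      rcases le_total A B with hab | hab
      · calc min (A + C) B ≤ A + C := min_le_left _ _
        _ = min A B + C := by rw [min_eq_left hab]
      · calc min (A + C) B ≤ B := min_le_right _ _
        _ ≤ B + C := le_add_of_nonneg_right hC0
        _ = min A B + C := by rw [min_eq_right hab]
    have hprod : A * B = (copt * x ^ (β / 2) * S) ^ 2 := by
      have he : (copt * x ^ (β / 2) * S) ^ 2 = copt ^ 2 * ((x ^ (β / 2)) ^ 2 * S ^ 2) := by
        ring
      rw [hAdef, hBdef, he, hxβ, hSsq]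
      ring
    have step2 : min A B ≤ copt * x ^ (β / 2) * S := by
      have h1 : min A B * min A B ≤ A * B :=
        mul_le_mul (min_le_left _ _) (min_le_right _ _) (le_min hA0 hB0) hA0
      have h2 : min A B ≤ Real.sqrt (A * B) := by
        have h3 := Real.sqrt_le_sqrt h1
        rwa [Real.sqrt_mul_self (le_min hA0 hB0)] at h3
      rw [hprod] at h2
      rwa [Real.sqrt_sq (by positivity)] at h2
    have step3 : copt * x ^ (β / 2) * S + C = copt * (x ^ (β / 2) * S / (1 - q)) := by
      rw [hCdef, hmr]
      field_simp
      ring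
    linarith [step1, step2]
end
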